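/- arXiv:1812.00806 — 4 statements merged into one kernel-verified Lean document; each statement's English description precedes it below -/
import Mathlib

section
/- The function f : ℝ³ → ℝ defined by f(x₁,x₂,x₃) = (x₁x₂x₃)/(x₁⁶+x₂⁶+x₃⁶) for (x₁,x₂,x₃) ≠ 0 and f(0)=0 is real analytic on every translate of each coordinate hyperplane, i.e., for each index i and each constant c ∈ ℝ, the restriction of f to the affine hyperplane {x : xᵢ = c} is real analytic. -/
/-!
Away from the origin `f` is a quotient of polynomials with nonvanishing denominator, hence
analytic, and the affine embedding of a hyperplane `{xᵢ = c}` with `c ≠ 0` misses the origin.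
On the hyperplanes `{xᵢ = 0}` the numerator `x₁x₂x₃` vanishes, so `f` is identically zero there.
-/

theorem analyticAt_toLp_insertNth {n : ℕ} (i : Fin (n + 1)) (c : ℝ) (y : EuclideanSpace ℝ (Fin n)) :
    AnalyticAt ℝ (fun y : EuclideanSpace ℝ (Fin n) =>
      (WithLp.toLp 2 (i.insertNth c (y : Fin n → ℝ) : Fin (n + 1) → ℝ) :
        EuclideanSpace ℝ (Fin (n + 1)))) y := by
  refine (PiLp.continuousLinearEquiv 2 ℝ fun _ : Fin (n + 1) => ℝ).symm.analyticAt _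
    |>.comp (AnalyticAt.pi fun j => ?_)
  cases j using Fin.succAboveCases i with
  | x => simpa using analyticAt_const
  | p k => simpa using (EuclideanSpace.proj k : EuclideanSpace ℝ (Fin n) →L[ℝ] ℝ).analyticAt y

theorem toLp_insertNth_ne_zero {n : ℕ} (i : Fin (n + 1)) {c : ℝ} (hc : c ≠ 0) (y : Fin n → ℝ) :
    (WithLp.toLp 2 (i.insertNth c y : Fin (n + 1) → ℝ) : EuclideanSpace ℝ (Fin (n + 1))) ≠ 0 :=
  fun h => hc (by simpa using congrArg (· i) h)

theorem sum_sixth_pow_pos {x : EuclideanSpace ℝ (Fin 3)} (hx : x ≠ 0) :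
    0 < x 0 ^ 6 + x 1 ^ 6 + x 2 ^ 6 := by
  have : x 0 ≠ 0 ∨ x 1 ≠ 0 ∨ x 2 ≠ 0 := by
    by_contra! h
    exact hx (by ext j; fin_cases j <;> simp [h.1, h.2.1, h.2.2])
  rcases this with h | h | h <;> positivity

section
variable {f : EuclideanSpace ℝ (Fin 3) → ℝ}
  (hf : ∀ x : EuclideanSpace ℝ (Fin 3), x ≠ 0 →
    f x = (x 0 * x 1 * x 2) / ((x 0) ^ 6 + (x 1) ^ 6 + (x 2) ^ 6))
include hf

theorem analyticAt_of_eq_div {x : EuclideanSpace ℝ (Fin 3)} (hx : x ≠ 0) : AnalyticAt ℝ f x := by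
  have hcoord (j : Fin 3) : AnalyticAt ℝ (fun x : EuclideanSpace ℝ (Fin 3) => x j) x :=
    (EuclideanSpace.proj j : EuclideanSpace ℝ (Fin 3) →L[ℝ] ℝ).analyticAt x
  have hrat : AnalyticAt ℝ
      (fun x : EuclideanSpace ℝ (Fin 3) => x 0 * x 1 * x 2 / (x 0 ^ 6 + x 1 ^ 6 + x 2 ^ 6)) x :=
    (((hcoord 0).mul (hcoord 1)).mul (hcoord 2)).div
      ((((hcoord 0).pow 6).add ((hcoord 1).pow 6)).add ((hcoord 2).pow 6)) (sum_sixth_pow_pos hx).ne'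
  exact hrat.congr ((eventually_ne_nhds hx).mono fun y hy => (hf y hy).symm)

theorem apply_eq_zero_of_coord_eq_zero (hf0 : f 0 = 0) {x : EuclideanSpace ℝ (Fin 3)} {i : Fin 3}
    (hxi : x i = 0) : f x = 0 := by
  rcases eq_or_ne x 0 with rfl | hx
  · exact hf0
  · rw [hf x hx]
    fin_cases i <;> simp_all
end

/-- The function `f(x) = x₁x₂x₃ / (x₁⁶ + x₂⁶ + x₃⁶)` (with `f 0 = 0`) is real analytic
on every translate `{x : xᵢ = c}` of each coordinate hyperplane: fixing the `i`-th
coordinate to `c`, the resulting function of the remaining two variables is real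
analytic on all of `ℝ²`. -/
theorem stmt_1 (f : EuclideanSpace ℝ (Fin 3) → ℝ)
    (hf : ∀ x : EuclideanSpace ℝ (Fin 3), x ≠ 0 →
      f x = (x 0 * x 1 * x 2) / ((x 0) ^ 6 + (x 1) ^ 6 + (x 2) ^ 6))
    (hf0 : f 0 = 0) :
    ∀ (i : Fin 3) (c : ℝ),
      AnalyticOnNhd ℝ
        (fun y : EuclideanSpace ℝ (Fin 2) =>
          f (WithLp.toLp 2 (i.insertNth c (y : Fin 2 → ℝ) : Fin 3 → ℝ) : EuclideanSpace ℝ (Fin 3)))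
        Set.univ := by
  intro i c
  rcases eq_or_ne c 0 with rfl | hc
  · have hzero : (fun y : EuclideanSpace ℝ (Fin 2) =>
        f (WithLp.toLp 2 (i.insertNth 0 (y : Fin 2 → ℝ) : Fin 3 → ℝ))) = fun _ => 0 :=
      funext fun y => apply_eq_zero_of_coord_eq_zero hf hf0 (i := i) (by simp)
    rw [hzero]
    exact analyticOnNhd_const
  · exact fun y _ => AnalyticAt.comp (g := f)
      (analyticAt_of_eq_div hf (toLp_insertNth_ne_zero i hc y)) (analyticAt_toLp_insertNth i c y)
end

section
/- The function g : ℝ³ → ℝ defined by g(x,y,z) = (x⁸ + y(x²−y³)² + z⁴)/(x¹⁰ + (x²−y³)² + z²) for (x,y,z) ≠ (0,0,0) and g(0,0,0) = 0 is not continuous at the origin. -/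
/-!
Along the cusp `x = t³, y = t², z = 0` the term `x² − y³` vanishes, so `g = x⁸ / x¹⁰ = t⁻⁶`,
which blows up as `t → 0⁺`; a function that is unbounded near a point is not continuous there.
-/

open Filter Topology

theorem stmt_2_general (g : ℝ × ℝ × ℝ → ℝ)
    (hg : ∀ p : ℝ × ℝ × ℝ, p ≠ 0 →
      g p = (p.1 ^ 8 + p.2.1 * (p.1 ^ 2 - p.2.1 ^ 3) ^ 2 + p.2.2 ^ 4) /
            (p.1 ^ 10 + (p.1 ^ 2 - p.2.1 ^ 3) ^ 2 + p.2.2 ^ 2)) :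
    ¬ ContinuousAt g 0 := by
  intro hcont
  have hcusp : Tendsto (fun t : ℝ => (t ^ 3, t ^ 2, (0 : ℝ))) (𝓝[>] 0) (𝓝 0) := by
    have : Continuous fun t : ℝ => (t ^ 3, t ^ 2, (0 : ℝ)) := by fun_prop
    exact (this.tendsto' 0 0 (by simp)).mono_left nhdsWithin_le_nhds
  have hg_cusp : ∀ t : ℝ, t ≠ 0 → g (t ^ 3, t ^ 2, 0) = t⁻¹ ^ 6 := by
    intro t ht
    rw [hg _ (by simp [ht])]
    have hcusp_eq : (t ^ 3) ^ 2 - (t ^ 2) ^ 3 = 0 := by ring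
    simp only [hcusp_eq]
    field_simp
    ring
  have hblowup : Tendsto (fun t : ℝ => g (t ^ 3, t ^ 2, 0)) (𝓝[>] 0) atTop :=
    ((tendsto_pow_atTop (by norm_num : 6 ≠ 0)).comp tendsto_inv_nhdsGT_zero).congr'
      (eventually_mem_nhdsWithin.mono fun t ht => (hg_cusp t (ne_of_gt ht)).symm)
  exact not_tendsto_atTop_of_tendsto_nhds (hcont.tendsto.comp hcusp) hblowup

/-- The function `g(x,y,z) = (x⁸ + y(x²−y³)² + z⁴)/(x¹⁰ + (x²−y³)² + z²)`
(with `g(0,0,0) = 0`) is not continuous at the origin. -/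
theorem stmt_2 (g : ℝ × ℝ × ℝ → ℝ)
    (hg : ∀ p : ℝ × ℝ × ℝ, p ≠ 0 →
      g p = (p.1 ^ 8 + p.2.1 * (p.1 ^ 2 - p.2.1 ^ 3) ^ 2 + p.2.2 ^ 4) /
            (p.1 ^ 10 + (p.1 ^ 2 - p.2.1 ^ 3) ^ 2 + p.2.2 ^ 2))
    (hg0 : g 0 = 0) :
    ¬ ContinuousAt g 0 :=
  stmt_2_general g hg
end

section
/- Let C ⊂ ℝⁿ be an open cone (i.e., ℝ·C = C and C∖{0} is open in ℝⁿ∖{0}), let V ⊂ C be a 2-dimensional linear subspace, and let C_V be the union of all 2-dimensional linear subspaces V' ⊆ C with dim(V' ∩ V) ≥ 1. Then C_V is an open cone contained in C that contains V. -/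
/-!
Every nonzero `x ∈ C_V` lies in a plane `span {w, x} ⊆ C` with `0 ≠ w ∈ V`. The image of the
unit circle under `(a, b) ↦ a • w + b • x` is a compact subset of the open set `C ∖ {0}`, so the
image under `(a, b) ↦ a • w + b • y` is still in `C` for `y` near `x`; since `C` is a cone,
`span {w, y} ⊆ C`. This plane meets `V` in `w`, unless `y` is a multiple of `w` and hence in `V`.
-/

open Submodule Topology Metric

section Algebra

variable {K E : Type*} [Field K] [AddCommGroup E] [Module K E]

/-- The set `C_V`. -/
def unionPlanesMeeting (C : Set E) (V : Submodule K E) : Set E :=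
  {x | ∃ W : Submodule K E, Module.finrank K W = 2 ∧ (W : Set E) ⊆ C ∧
    1 ≤ Module.finrank K ↥(W ⊓ V) ∧ x ∈ W}

lemma finrank_span_pair {x y : E} (h : LinearIndependent K ![x, y]) :
    Module.finrank K (span K {x, y}) = 2 := by
  rw [← Matrix.range_cons_cons_empty x y ![], finrank_span_eq_card h, Fintype.card_fin]

variable {C : Set E} {V : Submodule K E}

lemma unionPlanesMeeting_subset : unionPlanesMeeting C V ⊆ C :=
  fun _ ⟨_, _, hWC, _, hxW⟩ => hWC hxW

lemma subset_unionPlanesMeeting (hV : Module.finrank K V = 2) (hVC : (V : Set E) ⊆ C) :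
    (V : Set E) ⊆ unionPlanesMeeting C V :=
  fun _ hx => ⟨V, hV, hVC, by rw [inf_idem, hV]; norm_num, hx⟩

lemma smul_mem_unionPlanesMeeting (t : K) {x : E} (hx : x ∈ unionPlanesMeeting C V) :
    t • x ∈ unionPlanesMeeting C V :=
  let ⟨W, hW, hWC, hWV, hxW⟩ := hx
  ⟨W, hW, hWC, hWV, W.smul_mem t hxW⟩

lemma mem_unionPlanesMeeting_of_span_pair_subset (hV : Module.finrank K V = 2)
    (hVC : (V : Set E) ⊆ C) {w y : E} (hwV : w ∈ V) (hw : w ≠ 0)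
    (hC : (span K {w, y} : Set E) ⊆ C) : y ∈ unionPlanesMeeting C V := by
  by_cases hy : ∃ a : K, a • w = y
  · obtain ⟨a, rfl⟩ := hy
    exact subset_unionPlanesMeeting hV hVC (V.smul_mem a hwV)
  have hli : LinearIndependent K ![w, y] := (LinearIndependent.pair_iff' hw).2 (not_exists.1 hy)
  have : FiniteDimensional K (span K {w, y}) :=
    Module.finite_of_finrank_eq_succ (finrank_span_pair hli)
  have hwWV : w ∈ span K {w, y} ⊓ V := ⟨subset_span (by simp), hwV⟩
  exact ⟨span K {w, y}, finrank_span_pair hli, hC,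
    one_le_finrank_iff.2 ((Submodule.ne_bot_iff _).2 ⟨w, hwWV, hw⟩), subset_span (by simp)⟩

lemma exists_span_pair_subset_of_mem_unionPlanesMeeting (hV : Module.finrank K V = 2)
    (hVC : (V : Set E) ⊆ C) {x : E} (hx : x ∈ unionPlanesMeeting C V) (hx0 : x ≠ 0) :
    ∃ w ∈ V, LinearIndependent K ![w, x] ∧ (span K {w, x} : Set E) ⊆ C := by
  obtain ⟨W, hW, hWC, hWV, hxW⟩ := hx
  have : FiniteDimensional K W := Module.finite_of_finrank_eq_succ hW
  obtain ⟨v, ⟨hvW, hvV⟩, hv0⟩ := (Submodule.ne_bot_iff _).1 (one_le_finrank_iff.1 hWV)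
  by_cases hxv : ∃ a : K, a • v = x
  · obtain ⟨a, rfl⟩ := hxv
    have hxV : a • v ∈ V := V.smul_mem a hvV
    obtain ⟨w, hw⟩ := exists_linearIndependent_pair_of_one_lt_finrank (hV ▸ one_lt_two)
      (x := (⟨a • v, hxV⟩ : V)) (by simpa using hx0)
    refine ⟨w, w.2, LinearIndependent.pair_symm_iff.1 ?_, fun z hz => hVC ?_⟩
    · exact LinearIndependent.pair_iff.2 fun s t h =>
        LinearIndependent.pair_iff.1 hw s t (by ext; simpa using h)
    · exact span_le.2 (Set.insert_subset w.2 (Set.singleton_subset_iff.2 hxV)) hz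
  · exact ⟨v, hvV, (LinearIndependent.pair_iff' hv0).2 (not_exists.1 hxv),
      fun z hz => hWC (span_le.2 (Set.insert_subset hvW (Set.singleton_subset_iff.2 hxW)) hz)⟩

end Algebra

lemma exists_mem_sphere_eq_smul {F : Type*} [NormedAddCommGroup F] [NormedSpace ℝ F]
    [Nontrivial F] (q : F) : ∃ t : ℝ, ∃ p ∈ sphere (0 : F) 1, q = t • p := by
  rcases eq_or_ne q 0 with rfl | hq
  · obtain ⟨p, hp⟩ := NormedSpace.sphere_nonempty (x := (0 : F)).2 zero_le_one
    exact ⟨0, p, hp, by simp⟩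
  · exact ⟨‖q‖, ‖q‖⁻¹ • q, by simp [norm_smul, hq], by simp [smul_smul, hq]⟩

section Cone

variable {E : Type*} [AddCommGroup E] [Module ℝ E] {C : Set E}

lemma span_pair_subset_of_forall_mem_sphere (hcone : ∀ t : ℝ, ∀ x ∈ C, t • x ∈ C) {w y : E}
    (h : ∀ p ∈ sphere (0 : ℝ × ℝ) 1, p.1 • w + p.2 • y ∈ C) : (span ℝ {w, y} : Set E) ⊆ C := by
  intro z hz
  obtain ⟨a, b, rfl⟩ := mem_span_pair.1 hz
  obtain ⟨t, p, hp, hab⟩ := exists_mem_sphere_eq_smul (a, b)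
  obtain ⟨rfl, rfl⟩ := Prod.ext_iff.1 hab
  simpa [smul_add, smul_smul] using hcone t _ (h p hp)

variable [TopologicalSpace E] [ContinuousAdd E] [ContinuousSMul ℝ E]

lemma eventually_span_pair_subset (hcone : ∀ t : ℝ, ∀ x ∈ C, t • x ∈ C)
    (hopen : IsOpen (C \ {0})) {w x : E} (hli : LinearIndependent ℝ ![w, x])
    (hC : (span ℝ {w, x} : Set E) ⊆ C) : ∀ᶠ y in 𝓝 x, (span ℝ {w, y} : Set E) ⊆ C := by
  have hsphere : ∀ p ∈ sphere (0 : ℝ × ℝ) 1, p.1 • w + p.2 • x ∈ C \ {0} := by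
    intro p hp
    refine ⟨hC (mem_span_pair.2 ⟨_, _, rfl⟩), fun h0 => ?_⟩
    obtain ⟨h1, h2⟩ := LinearIndependent.pair_iff.1 hli p.1 p.2 h0
    have hp0 : p = 0 := Prod.ext h1 h2
    simp [hp0] at hp
  have hnear : ∀ᶠ y in 𝓝 x, ∀ p ∈ sphere (0 : ℝ × ℝ) 1, p.1 • w + p.2 • y ∈ C \ {0} :=
    (isCompact_sphere 0 1).eventually_forall_of_forall_eventually fun p hp =>
      (by fun_prop : Continuous fun z : E × (ℝ × ℝ) => z.2.1 • w + z.2.2 • z.1).continuousAt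
        |>.preimage_mem_nhds (hopen.mem_nhds (hsphere p hp))
  exact hnear.mono fun y hy => span_pair_subset_of_forall_mem_sphere hcone fun p hp => (hy p hp).1

lemma isOpen_unionPlanesMeeting_diff_zero {V : Submodule ℝ E}
    (hcone : ∀ t : ℝ, ∀ x ∈ C, t • x ∈ C) (hopen : IsOpen (C \ {0}))
    (hV : Module.finrank ℝ V = 2) (hVC : (V : Set E) ⊆ C) :
    IsOpen (unionPlanesMeeting C V \ {0}) := by
  refine isOpen_iff_mem_nhds.2 fun x ⟨hx, hx0⟩ => ?_
  obtain ⟨w, hwV, hli, hC⟩ := exists_span_pair_subset_of_mem_unionPlanesMeeting hV hVC hx hx0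
  filter_upwards [eventually_span_pair_subset hcone hopen hli hC,
    hopen.mem_nhds ⟨unionPlanesMeeting_subset hx, hx0⟩] with y hy hyC
  exact ⟨mem_unionPlanesMeeting_of_span_pair_subset hV hVC hwV (hli.ne_zero 0) hy, hyC.2⟩

end Cone

/-- Claim 2 of the paper. Let `C ⊆ ℝⁿ` be an open cone, `V ⊆ C` a 2-dimensional
linear subspace, and `C_V` the union of all 2-dimensional linear subspaces
`V' ⊆ C` meeting `V` in (at least) a line.  Then `C_V` is an open cone with
`V ⊆ C_V ⊆ C`. -/
theorem stmt_5 (n : ℕ) (C : Set (Fin n → ℝ))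
    (hcone : ∀ (t : ℝ), ∀ x ∈ C, t • x ∈ C)
    (hopen : IsOpen (C \ {0}))
    (V : Submodule ℝ (Fin n → ℝ)) (hV : Module.finrank ℝ V = 2)
    (hVC : (V : Set (Fin n → ℝ)) ⊆ C)
    (CV : Set (Fin n → ℝ))
    (hCV : CV = {x | ∃ W : Submodule ℝ (Fin n → ℝ), Module.finrank ℝ W = 2 ∧
      (W : Set (Fin n → ℝ)) ⊆ C ∧ 1 ≤ Module.finrank ℝ ↥(W ⊓ V) ∧ x ∈ W}) :
    (∀ (t : ℝ), ∀ x ∈ CV, t • x ∈ CV) ∧ IsOpen (CV \ {0}) ∧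
      CV ⊆ C ∧ (V : Set (Fin n → ℝ)) ⊆ CV := by
  change CV = unionPlanesMeeting C V at hCV
  subst hCV
  exact ⟨fun t _ => smul_mem_unionPlanesMeeting t,
    isOpen_unionPlanesMeeting_diff_zero hcone hopen hV hVC,
    unionPlanesMeeting_subset, subset_unionPlanesMeeting hV hVC⟩
end

section
/- Let f : ℝⁿ → ℝ (n ≥ 2) be a function such that for every 1-dimensional linear subspace L of ℝⁿ, the restriction of f to L is real analytic at the origin, and suppose for every 2-dimensional linear subspace V and every r ≥ 0 the function τ_r(p) := (d^r/dt^r)|_{t=0} f(tp) restricts to a homogeneous polynomial of degree r on V. Then each τ_r is a homogeneous polynomial of degree r on ℝⁿ. -/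
/-!
Every line parallel to a coordinate axis lies in a plane through the origin, so `τ_r` is a
polynomial of degree `≤ r` in each variable separately, and Lagrange interpolation one variable
at a time makes it a polynomial `φ` on all of `ℝⁿ`. Every point also lies in such a plane, so
`τ_r (c • x) = c ^ r * τ_r x`; comparing coefficients of `c ^ r` in `φ (c • x)` shows that
`τ_r` is the degree-`r` homogeneous component of `φ`.
-/

open MvPolynomial Module
open scoped Polynomial

namespace MvPolynomial

variable {R σ : Type*}

theorem IsHomogeneous.eval_smul [CommSemiring R] {φ : MvPolynomial σ R} {n : ℕ}
    (hφ : φ.IsHomogeneous n) (c : R) (x : σ → R) :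
    eval (c • x) φ = c ^ n * eval x φ := by
  conv_lhs => rw [φ.as_sum]
  conv_rhs => rw [φ.as_sum]
  rw [map_sum, map_sum, Finset.mul_sum]
  refine Finset.sum_congr rfl fun d hd => ?_
  simp only [eval_monomial, Finsupp.prod, Pi.smul_apply, smul_eq_mul, mul_pow,
    Finset.prod_mul_distrib, Finset.prod_pow_eq_pow_sum, ← hφ.degree_eq_sum_deg_support hd]
  ring

theorem natDegree_aeval_le_totalDegree [CommSemiring R] (φ : MvPolynomial σ R) (v : σ → R[X])
    (hv : ∀ i, (v i).natDegree ≤ 1) : (aeval v φ).natDegree ≤ φ.totalDegree := by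
  conv_lhs => rw [φ.as_sum]
  rw [map_sum]
  refine Polynomial.natDegree_sum_le_of_forall_le _ _ fun d hd => ?_
  rw [aeval_monomial, ← Polynomial.C_eq_algebraMap]
  refine (Polynomial.natDegree_C_mul_le _ _).trans <| (Polynomial.natDegree_prod_le _ _).trans <|
    le_trans ?_ (le_totalDegree hd)
  refine Finset.sum_le_sum fun i _ => Polynomial.natDegree_pow_le.trans ?_
  simpa using Nat.mul_le_mul_left (d i) (hv i)

theorem exists_natDegree_le_eval_add_smul [CommSemiring R] (φ : MvPolynomial σ R)
    (x y : σ → R) :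
    ∃ p : R[X], p.natDegree ≤ φ.totalDegree ∧ ∀ t, p.eval t = eval (x + t • y) φ := by
  refine ⟨aeval (fun i => Polynomial.C (y i) * Polynomial.X + Polynomial.C (x i)) φ,
    natDegree_aeval_le_totalDegree _ _ fun i => Polynomial.natDegree_linear_le, fun t => ?_⟩
  rw [← Polynomial.coe_aeval_eq_eval, comp_aeval_apply, ← aeval_eq_eval]
  congr 2
  funext i
  simp
  ring

theorem eval_homogeneousComponent_of_eval_smul [CommRing R] [IsDomain R] [Infinite R]
    {φ : MvPolynomial σ R} {n : ℕ}
    (h : ∀ (c : R) (x : σ → R), eval (c • x) φ = c ^ n * eval x φ) (x : σ → R) :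
    eval x (homogeneousComponent n φ) = eval x φ := by
  set e : ℕ → R := fun d => eval x (homogeneousComponent d φ)
  set D := φ.totalDegree
  have hpoly : ∑ d ∈ Finset.range (D + 1), Polynomial.C (e d) * Polynomial.X ^ d
      = Polynomial.C (eval x φ) * Polynomial.X ^ n := by
    refine Polynomial.funext fun t => ?_
    simp only [Polynomial.eval_finsetSum, Polynomial.eval_mul, Polynomial.eval_C,
      Polynomial.eval_pow, Polynomial.eval_X]
    calc ∑ d ∈ Finset.range (D + 1), e d * t ^ d
        = ∑ d ∈ Finset.range (D + 1), eval (t • x) (homogeneousComponent d φ) :=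
          Finset.sum_congr rfl fun d _ => by
            rw [(homogeneousComponent_isHomogeneous d φ).eval_smul, mul_comm]
      _ = eval (t • x) φ := by rw [← map_sum, sum_homogeneousComponent]
      _ = eval x φ * t ^ n := by rw [h, mul_comm]
  have hcoeff := congrArg (Polynomial.coeff · n) hpoly
  simp only [Polynomial.finsetSum_coeff, Polynomial.coeff_C_mul_X_pow, if_pos] at hcoeff
  rwa [Finset.sum_eq_single n (fun d _ hd => if_neg hd.symm) fun hn => ?_, if_pos rfl] at hcoeff
  have hD : D < n := by simp only [Finset.mem_range, not_lt] at hn; omega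
  rw [if_pos rfl]
  exact (congrArg (eval x) (homogeneousComponent_eq_zero n φ hD)).trans (map_zero _)

theorem exists_eval_eq_of_forall_update {K : Type*} [Field K] [Infinite K] {N : ℕ} (r : ℕ)
    (F : (Fin N → K) → K)
    (hF : ∀ (x : Fin N → K) (i : Fin N),
      ∃ p : K[X], p.natDegree ≤ r ∧ ∀ t, F (Function.update x i t) = p.eval t) :
    ∃ φ : MvPolynomial (Fin N) K, ∀ x, eval x φ = F x := by
  classical
  induction N with
  | zero => exact ⟨C (F 0), fun x => by rw [eval_C, Subsingleton.elim x 0]⟩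
  | succ N ih =>
    have hslice (c : K) : ∃ φ : MvPolynomial (Fin N) K, ∀ y, eval y φ = F (Fin.cons c y) :=
      ih (fun y => F (Fin.cons c y)) fun y i => by
        simpa only [Fin.cons_update] using hF (Fin.cons c y) i.succ
    choose φ hφ using hslice
    -- Lagrange interpolation in the first variable through the slices at `r + 1` nodes
    obtain ⟨s, hs⟩ := Infinite.exists_subset_card_eq K (r + 1)
    refine ⟨∑ c ∈ s, (Lagrange.basis s id c).toMvPolynomial 0 * rename Fin.succ (φ c),
      fun x => ?_⟩
    obtain ⟨p, hp, hpF⟩ := hF x 0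
    have hnode (c : K) : eval x (rename Fin.succ (φ c)) = p.eval c := by
      rw [eval_rename, hφ, ← hpF]
      conv_rhs => rw [← Fin.cons_self_tail x, Fin.update_cons_zero]
      rfl
    have hinterp : p = Lagrange.interpolate s id fun c => p.eval c :=
      Lagrange.eq_interpolate (Set.injOn_id _) <| by
        rw [hs]
        exact (Polynomial.degree_le_of_natDegree_le hp).trans_lt (by exact_mod_cast r.lt_succ_self)
    have hpx := congrArg (Polynomial.eval (x 0)) hinterp
    rw [Lagrange.interpolate_apply, Polynomial.eval_finsetSum] at hpx
    simp only [map_sum, map_mul, eval_toMvPolynomial, hnode]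
    rw [← Function.update_eq_self 0 x, hpF, hpx]
    simp [mul_comm]

end MvPolynomial

theorem Submodule.exists_le_finrank_eq {K V : Type*} [DivisionRing K] [AddCommGroup V]
    [Module K V] [FiniteDimensional K V] (N : Submodule K V) {k : ℕ} (hNk : finrank K N ≤ k)
    (hk : k ≤ finrank K V) : ∃ W : Submodule K V, N ≤ W ∧ finrank K W = k := by
  induction k, hNk using Nat.le_induction with
  | base => exact ⟨N, le_rfl, rfl⟩
  | succ k _ ih =>
    obtain ⟨W, hNW, hW⟩ := ih (Nat.le_of_succ_le hk)
    obtain ⟨v, hv⟩ : ∃ v, v ∉ W := by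
      by_contra! hall
      rw [Submodule.eq_top_iff'.mpr hall, finrank_top] at hW
      omega
    refine ⟨W ⊔ K ∙ v, hNW.trans le_sup_left, ?_⟩
    rw [Submodule.finrank_sup_span_singleton hv, hW]

theorem exists_finrank_eq_two_mem {K V : Type*} [DivisionRing K] [AddCommGroup V] [Module K V]
    [FiniteDimensional K V] (h : 2 ≤ finrank K V) (a b : V) :
    ∃ W : Submodule K V, finrank K W = 2 ∧ a ∈ W ∧ b ∈ W := by
  obtain ⟨W, hW, h2⟩ := (Submodule.span K (Set.range ![a, b])).exists_le_finrank_eq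
    (finrank_range_le_card _) h
  exact ⟨W, h2, hW (Submodule.subset_span ⟨0, rfl⟩),
    hW (Submodule.subset_span ⟨1, rfl⟩)⟩

theorem exists_isHomogeneous_eval_eq_of_forall_finrank_eq_two {K : Type*} [Field K] [Infinite K]
    {n : ℕ} (hn : 2 ≤ n) (r : ℕ) (F : (Fin n → K) → K)
    (hF : ∀ W : Submodule K (Fin n → K), finrank K W = 2 →
      ∃ g : MvPolynomial (Fin n) K, g.IsHomogeneous r ∧ ∀ x ∈ W, eval x g = F x) :
    ∃ g : MvPolynomial (Fin n) K, g.IsHomogeneous r ∧ ∀ x, eval x g = F x := by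
  have hdim : 2 ≤ finrank K (Fin n → K) := by rwa [Module.finrank_fin_fun]
  -- every affine line parallel to a coordinate axis lies in a plane through the origin
  have hline (x : Fin n → K) (i : Fin n) :
      ∃ p : K[X], p.natDegree ≤ r ∧ ∀ t, F (Function.update x i t) = p.eval t := by
    set a := x - Pi.single i (x i)
    obtain ⟨W, hW, ha, he⟩ := exists_finrank_eq_two_mem hdim a (Pi.single i 1)
    obtain ⟨g, hg, hgF⟩ := hF W hW
    obtain ⟨p, hp, hpg⟩ := g.exists_natDegree_le_eval_add_smul a (Pi.single i 1)
    refine ⟨p, hp.trans hg.totalDegree_le, fun t => ?_⟩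
    have hupd : Function.update x i t = a + t • Pi.single i 1 := by
      rw [Pi.update_eq_sub_add_single, ← Pi.single_smul', smul_eq_mul, mul_one]
    rw [hpg, hupd, hgF _ (W.add_mem ha (W.smul_mem t he))]
  have hhom (c : K) (x : Fin n → K) : F (c • x) = c ^ r * F x := by
    obtain ⟨W, hW, hx, -⟩ := exists_finrank_eq_two_mem hdim x x
    obtain ⟨g, hg, hgF⟩ := hF W hW
    rw [← hgF x hx, ← hgF _ (W.smul_mem c hx), hg.eval_smul]
  obtain ⟨φ, hφ⟩ := exists_eval_eq_of_forall_update r F hline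
  refine ⟨homogeneousComponent r φ, homogeneousComponent_isHomogeneous r φ, fun x => ?_⟩
  rw [eval_homogeneousComponent_of_eval_smul (fun c y => by rw [hφ, hφ, hhom]), hφ]

theorem stmt_11_general (n : ℕ) (hn : 2 ≤ n)
    (τ : ℕ → (Fin n → ℝ) → ℝ)
    (hplane : ∀ (W : Submodule ℝ (Fin n → ℝ)), Module.finrank ℝ W = 2 → ∀ r : ℕ,
      ∃ g : MvPolynomial (Fin n) ℝ, g.IsHomogeneous r ∧
        ∀ x ∈ W, MvPolynomial.eval x g = τ r x) :
    ∀ r : ℕ, ∃ g : MvPolynomial (Fin n) ℝ, g.IsHomogeneous r ∧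
      ∀ x : Fin n → ℝ, MvPolynomial.eval x g = τ r x := fun r =>
  exists_isHomogeneous_eval_eq_of_forall_finrank_eq_two hn r (τ r) fun W hW => hplane W hW r

/-- If `f : ℝⁿ → ℝ` (`n ≥ 2`) is real analytic at the origin on every line through `0`,
and for every `r` the function `τ_r(p) = (dʳ/dtʳ)|₀ f(tp)` restricts to a degree-`r`
homogeneous polynomial on every 2-dimensional linear subspace, then each `τ_r` is a
degree-`r` homogeneous polynomial on all of `ℝⁿ`. -/
theorem stmt_11 (n : ℕ) (hn : 2 ≤ n) (f : (Fin n → ℝ) → ℝ)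
    (hline : ∀ p : Fin n → ℝ, p ≠ 0 → AnalyticAt ℝ (fun t : ℝ => f (t • p)) 0)
    (τ : ℕ → (Fin n → ℝ) → ℝ)
    (hτ : ∀ (r : ℕ) (p : Fin n → ℝ), p ≠ 0 →
      τ r p = iteratedDeriv r (fun t : ℝ => f (t • p)) 0)
    (hτ0 : ∀ r : ℕ, 1 ≤ r → τ r 0 = 0) (hτ00 : τ 0 0 = f 0)
    (hplane : ∀ (W : Submodule ℝ (Fin n → ℝ)), Module.finrank ℝ W = 2 → ∀ r : ℕ,
      ∃ g : MvPolynomial (Fin n) ℝ, g.IsHomogeneous r ∧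
        ∀ x ∈ W, MvPolynomial.eval x g = τ r x) :
    ∀ r : ℕ, ∃ g : MvPolynomial (Fin n) ℝ, g.IsHomogeneous r ∧
      ∀ x : Fin n → ℝ, MvPolynomial.eval x g = τ r x :=
  stmt_11_general n hn τ hplane
end
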